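/- Let f : ℝ → ℝ be convex with conjugate f*, and suppose y₀ = f'(u₀) for some subgradient f'(u₀) ∈ ∂f(u₀). If y₁ is defined by y₁ = argmax_y { y·g - f*(y) - τ·U(y, y₀) }, where U(y, y₀) = f*(y) - f*(y₀) - (f*)'(y₀)·(y - y₀) is the Bregman divergence of f* with (f*)'(y₀) = u₀, then y₁ ∈ ∂f(u₁) where u₁ = (τ·u₀ + g)/(1 + τ). -/

import Mathlib

/-!
Optimality of `y₁` for the concave objective `y ↦ y g - f* y - τ U(y, y₀)` says exactly that
`(1 + τ) f*` lies above the line of slope `g + τ u₀` through `y₁`, i.e. `u₁ ∈ ∂f*(y₁)`.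
Fenchel duality for the convex function `f` then turns this into `y₁ ∈ ∂f(u₁)`.
-/

/-- `y` is a subgradient of `f` at `u`. -/
def IsSubgradientAt (f : ℝ → ℝ) (u y : ℝ) : Prop :=
  ∀ v : ℝ, f u + y * (v - u) ≤ f v

open Set

theorem ConvexOn.isSubgradientAt_rightDeriv {f : ℝ → ℝ} (hf : ConvexOn ℝ univ f) (u : ℝ) :
    IsSubgradientAt f u (derivWithin f (Ioi u) u) := by
  have hu : u ∈ interior univ := by simp
  intro v
  rcases lt_trichotomy v u with hvu | rfl | huv
  · have hslope : slope f v u ≤ derivWithin f (Ioi u) u :=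
      (hf.slope_le_leftDeriv_of_mem_interior (mem_univ v) hu hvu).trans
        (hf.leftDeriv_le_rightDeriv_of_mem_interior hu)
    rw [slope_def_field, div_le_iff₀ (sub_pos.2 hvu)] at hslope
    linarith
  · simp
  · have hslope : derivWithin f (Ioi u) u ≤ slope f u v :=
      hf.rightDeriv_le_slope_of_mem_interior hu (mem_univ v) huv
    rw [slope_def_field, le_div_iff₀ (sub_pos.2 huv)] at hslope
    linarith

theorem isSubgradientAt_of_forall_le_bregman_step {φ : ℝ → ℝ} {τ g u₀ y₀ y₁ : ℝ} (hτ : 0 < τ)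
    (hmax : ∀ y : ℝ,
      y * g - φ y - τ * (φ y - φ y₀ - u₀ * (y - y₀)) ≤
      y₁ * g - φ y₁ - τ * (φ y₁ - φ y₀ - u₀ * (y₁ - y₀))) :
    IsSubgradientAt φ y₁ ((τ * u₀ + g) / (1 + τ)) := by
  intro y
  have hτ' : 0 < 1 + τ := by linarith
  have h : (τ * u₀ + g) * (y - y₁) ≤ (1 + τ) * (φ y - φ y₁) := by linarith [hmax y]
  have h' : (τ * u₀ + g) * (y - y₁) / (1 + τ) ≤ φ y - φ y₁ := by rwa [div_le_iff₀' hτ']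
  rw [div_mul_eq_mul_div]
  linarith

section FenchelConjugate

variable {f fstar : ℝ → ℝ}
  (hconj : ∀ y : ℝ, IsLUB {z : ℝ | ∃ u : ℝ, z = u * y - f u} (fstar y))
include hconj

theorem conj_eq_of_isSubgradientAt {u y : ℝ} (hsub : IsSubgradientAt f u y) :
    fstar y = u * y - f u := by
  refine le_antisymm ((hconj y).2 ?_) ((hconj y).1 ⟨u, rfl⟩)
  rintro _ ⟨v, rfl⟩
  linarith [hsub v]

theorem isSubgradientAt_of_isSubgradientAt_conj (hf : ConvexOn ℝ univ f) {u y : ℝ}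
    (hsub : IsSubgradientAt fstar y u) : IsSubgradientAt f u y := by
  set y' := derivWithin f (Ioi u) u
  have hy' : fstar y' = u * y' - f u :=
    conj_eq_of_isSubgradientAt hconj (hf.isSubgradientAt_rightDeriv u)
  -- Fenchel–Young equality at `(u, y)`, obtained through the subgradient `y'` of `f` at `u`
  have hfy : fstar y = u * y - f u := by
    refine le_antisymm ?_ ((hconj y).1 ⟨u, rfl⟩)
    linarith [hsub y']
  intro v
  linarith [(hconj y).1 ⟨v, rfl⟩]

end FenchelConjugate

theorem stmt0_general (f fstar : ℝ → ℝ) (τ g u₀ y₀ y₁ : ℝ)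
    (hτ : 0 < τ)
    (hf : ConvexOn ℝ Set.univ f)
    (hconj : ∀ y : ℝ, IsLUB {z : ℝ | ∃ u : ℝ, z = u * y - f u} (fstar y))
    (hmax : ∀ y : ℝ,
      y * g - fstar y - τ * (fstar y - fstar y₀ - u₀ * (y - y₀)) ≤
      y₁ * g - fstar y₁ - τ * (fstar y₁ - fstar y₀ - u₀ * (y₁ - y₀))) :
    IsSubgradientAt f ((τ * u₀ + g) / (1 + τ)) y₁ :=
  isSubgradientAt_of_isSubgradientAt_conj hconj hf
    (isSubgradientAt_of_forall_le_bregman_step hτ hmax)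

theorem stmt0 (f fstar : ℝ → ℝ) (τ g u₀ y₀ y₁ : ℝ)
    (hτ : 0 < τ)
    (hf : ConvexOn ℝ Set.univ f)
    (hconj : ∀ y : ℝ, IsLUB {z : ℝ | ∃ u : ℝ, z = u * y - f u} (fstar y))
    (hy₀ : IsSubgradientAt f u₀ y₀)
    (hu₀ : IsSubgradientAt fstar y₀ u₀)
    (hmax : ∀ y : ℝ,
      y * g - fstar y - τ * (fstar y - fstar y₀ - u₀ * (y - y₀)) ≤
      y₁ * g - fstar y₁ - τ * (fstar y₁ - fstar y₀ - u₀ * (y₁ - y₀))) :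
    IsSubgradientAt f ((τ * u₀ + g) / (1 + τ)) y₁ :=
  stmt0_general f fstar τ g u₀ y₀ y₁ hτ hf hconj hmax
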